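/- The set ℍ(Ω) of Hausdorff continuous interval-valued functions on Ω, with the pointwise partial order [a₁,a₂] ≤ [b₁,b₂] iff a₁ ≤ b₁ and a₂ ≤ b₂, is order complete: every subset of ℍ(Ω) has a supremum and an infimum in ℍ(Ω). -/
import Mathlib

open Set Metric

/-- Lower Baire operator `I(f)`, on an open set `Ω` as a subtype. -/
noncomputable def lowerBaire {n : ℕ} {Ω : Set (EuclideanSpace ℝ (Fin n))}
    (f : Ω → EReal) : Ω → EReal :=
  fun x => ⨆ δ : {δ : ℝ // 0 < δ}, ⨅ y : (ball x δ.val : Set Ω), f y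

/-- Upper Baire operator `S(f)`. -/
noncomputable def upperBaire {n : ℕ} {Ω : Set (EuclideanSpace ℝ (Fin n))}
    (f : Ω → EReal) : Ω → EReal :=
  fun x => ⨅ δ : {δ : ℝ // 0 < δ}, ⨆ y : (ball x δ.val : Set Ω), f y

/-- An interval-valued function `f = [f₁, f₂]` is Hausdorff continuous iff for every
interval-valued function `g = [g₁, g₂]` contained pointwise in `f`, the graph completion
`F(g) = [I(g₁), S(g₂)]` equals `f`. -/
def HContinuous {n : ℕ} {Ω : Set (EuclideanSpace ℝ (Fin n))}
    (f₁ f₂ : Ω → EReal) : Prop :=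
  ∀ g₁ g₂ : Ω → EReal, (∀ x, g₁ x ≤ g₂ x) → (∀ x, f₁ x ≤ g₁ x ∧ g₂ x ≤ f₂ x) →
    lowerBaire g₁ = f₁ ∧ upperBaire g₂ = f₂

/-- The set `ℍ(Ω)` of Hausdorff continuous interval-valued functions on `Ω`. -/
def HCont {n : ℕ} (Ω : Set (EuclideanSpace ℝ (Fin n))) : Type :=
  {p : (Ω → EReal) × (Ω → EReal) // (∀ x, p.1 x ≤ p.2 x) ∧ HContinuous p.1 p.2}

/-- The pointwise componentwise order on `ℍ(Ω)`. -/
def HContLe {n : ℕ} {Ω : Set (EuclideanSpace ℝ (Fin n))} (f g : HCont Ω) : Prop :=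
  ∀ x, f.val.1 x ≤ g.val.1 x ∧ f.val.2 x ≤ g.val.2 x

section Aux

variable {n : ℕ} {Ω : Set (EuclideanSpace ℝ (Fin n))}

lemma lowerBaire_le (f : Ω → EReal) : lowerBaire f ≤ f := by
  intro x
  exact iSup_le fun δ => iInf_le_of_le ⟨x, mem_ball_self δ.2⟩ le_rfl

lemma le_upperBaire (f : Ω → EReal) : f ≤ upperBaire f := by
  intro x
  exact le_iInf fun δ => le_iSup_of_le ⟨x, mem_ball_self δ.2⟩ le_rfl

lemma lowerBaire_mono {f g : Ω → EReal} (h : f ≤ g) : lowerBaire f ≤ lowerBaire g := by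
  intro x
  exact iSup_mono fun δ => iInf_mono fun y => h y

lemma upperBaire_mono {f g : Ω → EReal} (h : f ≤ g) : upperBaire f ≤ upperBaire g := by
  intro x
  exact iInf_mono fun δ => iSup_mono fun y => h y

lemma lowerBaire_idem (f : Ω → EReal) : lowerBaire (lowerBaire f) = lowerBaire f := by
  apply le_antisymm (lowerBaire_mono (lowerBaire_le f))
  intro x
  refine iSup_le fun δ => ?_
  refine le_iSup_of_le (i := ⟨δ.val / 2, by have := δ.2; linarith⟩) ?_
  refine le_iInf fun y => ?_
  refine le_iSup_of_le (i := ⟨δ.val / 2, by have := δ.2; linarith⟩) ?_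
  refine le_iInf fun z => ?_
  refine iInf_le_of_le ⟨z.val, ?_⟩ le_rfl
  have hy : dist (y : Ω) x < δ.val / 2 := mem_ball.mp y.2
  have hz : dist (z : Ω) (y : Ω) < δ.val / 2 := mem_ball.mp z.2
  have := dist_triangle (z : Ω) (y : Ω) x
  exact mem_ball.mpr (by linarith)

lemma upperBaire_idem (f : Ω → EReal) : upperBaire (upperBaire f) = upperBaire f := by
  apply le_antisymm _ (upperBaire_mono (le_upperBaire f))
  intro x
  refine le_iInf fun δ => ?_
  refine iInf_le_of_le (i := ⟨δ.val / 2, by have := δ.2; linarith⟩) ?_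
  refine iSup_le fun y => ?_
  refine iInf_le_of_le (i := ⟨δ.val / 2, by have := δ.2; linarith⟩) ?_
  refine iSup_le fun z => ?_
  refine le_iSup_of_le ⟨z.val, ?_⟩ le_rfl
  have hy : dist (y : Ω) x < δ.val / 2 := mem_ball.mp y.2
  have hz : dist (z : Ω) (y : Ω) < δ.val / 2 := mem_ball.mp z.2
  have := dist_triangle (z : Ω) (y : Ω) x
  exact mem_ball.mpr (by linarith)

/-- `S ∘ I ∘ S ∘ I = S ∘ I`. -/
lemma SISI (f : Ω → EReal) :
    upperBaire (lowerBaire (upperBaire (lowerBaire f))) = upperBaire (lowerBaire f) := by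
  apply le_antisymm
  · calc upperBaire (lowerBaire (upperBaire (lowerBaire f)))
        ≤ upperBaire (upperBaire (lowerBaire f)) :=
          upperBaire_mono (lowerBaire_le _)
      _ = upperBaire (lowerBaire f) := upperBaire_idem _
  · refine upperBaire_mono ?_
    calc lowerBaire f = lowerBaire (lowerBaire f) := (lowerBaire_idem f).symm
      _ ≤ lowerBaire (upperBaire (lowerBaire f)) := lowerBaire_mono (le_upperBaire _)

/-- `I ∘ S ∘ I ∘ S = I ∘ S`. -/
lemma ISIS (f : Ω → EReal) :
    lowerBaire (upperBaire (lowerBaire (upperBaire f))) = lowerBaire (upperBaire f) := by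
  apply le_antisymm
  · refine lowerBaire_mono ?_
    calc upperBaire (lowerBaire (upperBaire f)) ≤ upperBaire (upperBaire f) :=
          upperBaire_mono (lowerBaire_le _)
      _ = upperBaire f := upperBaire_idem _
  · calc lowerBaire (upperBaire f) = lowerBaire (lowerBaire (upperBaire f)) :=
          (lowerBaire_idem _).symm
      _ ≤ lowerBaire (upperBaire (lowerBaire (upperBaire f))) :=
          lowerBaire_mono (le_upperBaire _)

/-- Sufficient condition for H-continuity. -/
lemma hContinuous_of (f₁ f₂ : Ω → EReal)
    (h1 : lowerBaire f₂ = f₁) (h2 : upperBaire f₁ = f₂) : HContinuous f₁ f₂ := by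
  intro g₁ g₂ hg hfg
  have hg1 : f₁ ≤ g₁ := fun x => (hfg x).1
  have hg2 : g₂ ≤ f₂ := fun x => (hfg x).2
  have hg12 : (g₁ : Ω → EReal) ≤ g₂ := fun x => hg x
  constructor
  · apply le_antisymm
    · calc lowerBaire g₁ ≤ lowerBaire f₂ := lowerBaire_mono (hg12.trans hg2)
        _ = f₁ := h1
    · calc f₁ = lowerBaire (lowerBaire f₂) := by rw [lowerBaire_idem, h1]
        _ = lowerBaire f₁ := by rw [h1]
        _ ≤ lowerBaire g₁ := lowerBaire_mono hg1
  · apply le_antisymm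
    · calc upperBaire g₂ ≤ upperBaire f₂ := upperBaire_mono hg2
        _ = upperBaire (upperBaire f₁) := by rw [h2]
        _ = upperBaire f₁ := upperBaire_idem _
        _ = f₂ := h2
    · calc f₂ = upperBaire f₁ := h2.symm
        _ ≤ upperBaire g₂ := upperBaire_mono (hg1.trans hg12)

lemma hcont_lower (f : HCont Ω) : lowerBaire f.val.2 = f.val.1 :=
  (f.2.2 f.val.2 f.val.2 (fun _ => le_rfl) (fun x => ⟨f.2.1 x, le_rfl⟩)).1

lemma hcont_upper (f : HCont Ω) : upperBaire f.val.1 = f.val.2 :=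
  (f.2.2 f.val.1 f.val.1 (fun _ => le_rfl) (fun x => ⟨le_rfl, f.2.1 x⟩)).2

end Aux

/-- `ℍ(Ω)` is order complete: every subset has a supremum and an infimum in `ℍ(Ω)`. -/
theorem hcont_order_complete {n : ℕ}
    (Ω : Set (EuclideanSpace ℝ (Fin n))) (hΩ : IsOpen Ω) (S : Set (HCont Ω)) :
    (∃ u : HCont Ω, (∀ f ∈ S, HContLe f u) ∧ ∀ b : HCont Ω, (∀ f ∈ S, HContLe f b) → HContLe u b) ∧
    (∃ l : HCont Ω, (∀ f ∈ S, HContLe l f) ∧ ∀ b : HCont Ω, (∀ f ∈ S, HContLe b f) → HContLe b l) := by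
  constructor
  · -- supremum
    set ψ : Ω → EReal := fun x => ⨆ f : S, (f : HCont Ω).val.2 x with hψ
    set u₂ : Ω → EReal := upperBaire (lowerBaire ψ) with hu₂
    set u₁ : Ω → EReal := lowerBaire u₂ with hu₁
    have hU2 : upperBaire u₁ = u₂ := by rw [hu₁, hu₂]; exact SISI ψ
    have hUcont : HContinuous u₁ u₂ := hContinuous_of u₁ u₂ rfl hU2
    have hUle : ∀ x, u₁ x ≤ u₂ x := fun x => (lowerBaire_le u₂) x
    refine ⟨⟨(u₁, u₂), hUle, hUcont⟩, ?_, ?_⟩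
    · intro f hf x
      have h2 : f.val.2 ≤ u₂ := by
        calc f.val.2 = upperBaire (lowerBaire f.val.2) := by
              rw [hcont_lower f, hcont_upper f]
          _ ≤ u₂ := upperBaire_mono (lowerBaire_mono (fun x => le_iSup
              (fun g : S => (g : HCont Ω).val.2 x) ⟨f, hf⟩))
      have h1 : f.val.1 ≤ u₁ := by
        calc f.val.1 = lowerBaire f.val.2 := (hcont_lower f).symm
          _ ≤ u₁ := lowerBaire_mono h2
      exact ⟨h1 x, h2 x⟩
    · intro b hb x
      have hψb : ψ ≤ b.val.2 := by
        intro y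
        exact iSup_le fun f => (hb f f.2 y).2
      have h2 : u₂ ≤ b.val.2 := by
        calc u₂ ≤ upperBaire (lowerBaire b.val.2) :=
              upperBaire_mono (lowerBaire_mono hψb)
          _ = b.val.2 := by rw [hcont_lower b, hcont_upper b]
      have h1 : u₁ ≤ b.val.1 := by
        calc u₁ ≤ lowerBaire b.val.2 := lowerBaire_mono h2
          _ = b.val.1 := hcont_lower b
      exact ⟨h1 x, h2 x⟩
  · -- infimum
    set φ : Ω → EReal := fun x => ⨅ f : S, (f : HCont Ω).val.1 x with hφ
    set l₁ : Ω → EReal := lowerBaire (upperBaire φ) with hl₁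
    set l₂ : Ω → EReal := upperBaire l₁ with hl₂
    have hL1 : lowerBaire l₂ = l₁ := by rw [hl₂, hl₁]; exact ISIS φ
    have hLcont : HContinuous l₁ l₂ := hContinuous_of l₁ l₂ hL1 rfl
    have hLle : ∀ x, l₁ x ≤ l₂ x := fun x => (le_upperBaire l₁) x
    refine ⟨⟨(l₁, l₂), hLle, hLcont⟩, ?_, ?_⟩
    · intro f hf x
      have h1 : l₁ ≤ f.val.1 := by
        calc l₁ ≤ lowerBaire (upperBaire f.val.1) :=
              lowerBaire_mono (upperBaire_mono (fun x => iInf_le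
                (fun g : S => (g : HCont Ω).val.1 x) ⟨f, hf⟩))
          _ = f.val.1 := by rw [hcont_upper f, hcont_lower f]
      have h2 : l₂ ≤ f.val.2 := by
        calc l₂ ≤ upperBaire f.val.1 := upperBaire_mono h1
          _ = f.val.2 := hcont_upper f
      exact ⟨h1 x, h2 x⟩
    · intro b hb x
      have hφb : b.val.1 ≤ φ := by
        intro y
        exact le_iInf fun f => (hb f f.2 y).1
      have h1 : b.val.1 ≤ l₁ := by
        calc b.val.1 = lowerBaire (upperBaire b.val.1) := by
              rw [hcont_upper b, hcont_lower b]
          _ ≤ l₁ := lowerBaire_mono (upperBaire_mono hφb)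
      have h2 : b.val.2 ≤ l₂ := by
        calc b.val.2 = upperBaire b.val.1 := (hcont_upper b).symm
          _ ≤ l₂ := upperBaire_mono h1
      exact ⟨h1 x, h2 x⟩
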